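/- Let Ω_n ⊂ ℂ be domains with complements E_n = ℂ \ Ω_n converging in the Hausdorff sense to a compact set E ⊂ ℂ. Let A ≥ 1 and let γ_n : [0,1] → closure(Ω_n) be A-uniform curves parametrized by rescaled arclength such that γ_n(0) → z₀ and γ_n(1) → z₁ with z₀ ≠ z₁. Then there exist a component Ω of ℂ \ E and a subsequence of (γ_n) converging uniformly to an A-uniform curve γ : [0,1] → closure(Ω). -/

import Mathlib

/-! Constant speed together with `ℓ(γₙ) ≤ A |γₙ(0) - γₙ(1)|` makes the curves `γₙ` uniformly
Lipschitz, so Arzelà–Ascoli yields a uniformly convergent subsequence. Length is lower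
semicontinuous under pointwise convergence, so both the length bound and the cigar bound pass to
the limit `γ`; in the cigar bound, `dist(γₙ(t), ∂Ωₙ) ≤ dist(γₙ(t), Eₙ)` and the Hausdorff
convergence `Eₙ → E` turn the right-hand side into `A dist(γ(t), E)`. At `t ∈ (0, 1)` the cigars of
the `γₙ` have size at least `min(t, 1 - t) |z₀ - z₁|` in the limit, so `γ(0, 1)` misses `E`, hence
lies in one component `Ω` of `ℂ \ E`, whose boundary lies in `E`. -/

open Set Metric Filter Topology
open scoped ENNReal

noncomputable section

/-- `S` is a connected component of the complement of `Ω`. -/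
def IsComplComponent (Ω S : Set ℂ) : Prop := ∃ z ∈ Ωᶜ, S = connectedComponentIn Ωᶜ z

/-- The inner length metric `λ_Ω`: infimum of lengths of curves in `Ω` joining the points. -/
def innerLen (Ω : Set ℂ) (a b : ℂ) : ℝ≥0∞ :=
  ⨅ γ : {γ : ℝ → ℂ // ContinuousOn γ (Set.Icc 0 1) ∧ Set.MapsTo γ (Set.Icc 0 1) Ω ∧
      γ 0 = a ∧ γ 1 = b}, eVariationOn γ.1 (Set.Icc 0 1)

/-- The inner diameter metric `ρ_Ω`: infimum of diameters of curves in `Ω` joining the points. -/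
def innerDiam (Ω : Set ℂ) (a b : ℂ) : ℝ≥0∞ :=
  ⨅ γ : {γ : ℝ → ℂ // ContinuousOn γ (Set.Icc 0 1) ∧ Set.MapsTo γ (Set.Icc 0 1) Ω ∧
      γ 0 = a ∧ γ 1 = b}, EMetric.diam (γ.1 '' Set.Icc 0 1)

/-- An inner `A`-uniform curve (length version) in `Ω`. -/
def IsInnerUniformCurve (A : ℝ) (Ω : Set ℂ) (γ : ℝ → ℂ) : Prop :=
  ContinuousOn γ (Set.Icc 0 1) ∧ Set.MapsTo γ (Set.Icc 0 1) Ω ∧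
  eVariationOn γ (Set.Icc 0 1) ≤ ENNReal.ofReal A * innerLen Ω (γ 0) (γ 1) ∧
  ∀ t ∈ Set.Icc (0:ℝ) 1,
    min (eVariationOn γ (Set.Icc 0 t)) (eVariationOn γ (Set.Icc t 1))
      ≤ ENNReal.ofReal (A * Metric.infDist (γ t) (frontier Ω))

/-- An inner `A`-uniform domain in the plane. -/
def IsInnerUniformDomain (A : ℝ) (Ω : Set ℂ) : Prop :=
  IsOpen Ω ∧ IsConnected Ω ∧
  ∀ a ∈ Ω, ∀ b ∈ Ω, ∃ γ : ℝ → ℂ, IsInnerUniformCurve A Ω γ ∧ γ 0 = a ∧ γ 1 = b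

/-- An `A`-uniform curve in `Ω`. -/
def IsUniformCurve (A : ℝ) (Ω : Set ℂ) (γ : ℝ → ℂ) : Prop :=
  ContinuousOn γ (Set.Icc 0 1) ∧ Set.MapsTo γ (Set.Icc 0 1) Ω ∧
  eVariationOn γ (Set.Icc 0 1) ≤ ENNReal.ofReal (A * dist (γ 0) (γ 1)) ∧
  ∀ t ∈ Set.Icc (0:ℝ) 1,
    min (eVariationOn γ (Set.Icc 0 t)) (eVariationOn γ (Set.Icc t 1))
      ≤ ENNReal.ofReal (A * Metric.infDist (γ t) (frontier Ω))

/-- An `A`-uniform domain in the plane. -/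
def IsUniformDomain (A : ℝ) (Ω : Set ℂ) : Prop :=
  IsOpen Ω ∧ IsConnected Ω ∧
  ∀ a ∈ Ω, ∀ b ∈ Ω, ∃ γ : ℝ → ℂ, IsUniformCurve A Ω γ ∧ γ 0 = a ∧ γ 1 = b
/-- An `A`-uniform curve with values in the closure of `Ω` (endpoints may lie on `∂Ω`). -/
def IsUniformCurveIn (A : ℝ) (Ω : Set ℂ) (γ : ℝ → ℂ) : Prop :=
  ContinuousOn γ (Set.Icc 0 1) ∧ Set.MapsTo γ (Set.Icc 0 1) (closure Ω) ∧
  eVariationOn γ (Set.Icc 0 1) ≤ ENNReal.ofReal (A * dist (γ 0) (γ 1)) ∧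
  ∀ t ∈ Set.Icc (0:ℝ) 1,
    min (eVariationOn γ (Set.Icc 0 t)) (eVariationOn γ (Set.Icc t 1))
      ≤ ENNReal.ofReal (A * Metric.infDist (γ t) (frontier Ω))

/-- `γ` is parametrized by rescaled arclength (constant speed) on `[0,1]`. -/
def ConstSpeedOn (γ : ℝ → ℂ) : Prop :=
  ∀ s t : ℝ, 0 ≤ s → s ≤ t → t ≤ 1 →
    eVariationOn γ (Set.Icc s t) = ENNReal.ofReal (t - s) * eVariationOn γ (Set.Icc 0 1)

open scoped NNReal BoundedContinuousFunction

theorem eVariationOn_le_liminf_of_tendsto {α E ι : Type*} [LinearOrder α] [PseudoEMetricSpace E]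
    {p : Filter ι} {F : ι → α → E} {f : α → E} {s : Set α}
    (hF : ∀ x ∈ s, Tendsto (fun i => F i x) p (𝓝 (f x))) :
    eVariationOn f s ≤ p.liminf fun i => eVariationOn (F i) s :=
  le_of_forall_lt_imp_le_of_dense fun _ hv => le_liminf_of_le (by isBoundedDefault)
    ((eVariationOn.lowerSemicontinuous_aux hF hv).mono fun _ => le_of_lt)

theorem liminf_le_mul_infEDist_of_tendsto {ι X : Type*} [PseudoEMetricSpace X] {p : Filter ι}
    [p.NeBot] {a : ι → ℝ≥0∞} {c : ℝ≥0∞} {x : ι → X} {x₀ : X} {S : ι → Set X} {E : Set X}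
    (hc : c ≠ ⊤) (hx : Tendsto x p (𝓝 x₀))
    (hS : Tendsto (fun i => hausdorffEDist (S i) E) p (𝓝 0))
    (ha : ∀ i, a i ≤ c * infEDist (x i) (S i)) :
    p.liminf a ≤ c * infEDist x₀ E := by
  have hlim : Tendsto (fun i => c * (infEDist (x i) E + hausdorffEDist E (S i)))
      p (𝓝 (c * infEDist x₀ E)) := by
    have hS' : Tendsto (fun i => hausdorffEDist E (S i)) p (𝓝 0) := by
      simpa only [hausdorffEDist_comm] using hS
    simpa only [add_zero, Function.comp_def] using ENNReal.Tendsto.const_mul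
      (((continuous_infEDist (s := E)).tendsto x₀).comp hx |>.add hS') (Or.inr hc)
  refine (liminf_le_liminf (Eventually.of_forall fun i => (ha i).trans ?_)).trans_eq hlim.liminf_eq
  exact mul_le_mul_right infEDist_le_infEDist_add_hausdorffEDist c

theorem ofReal_infDist_frontier_le_infEDist_compl {V : Type*} [NormedAddCommGroup V]
    [NormedSpace ℝ V] [FiniteDimensional ℝ V] {s : Set V} {x : V} (hx : x ∈ closure s) :
    ENNReal.ofReal (infDist x (frontier s)) ≤ infEDist x sᶜ := by
  refine (ENNReal.ofReal_le_ofReal ?_).trans ENNReal.ofReal_toReal_le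
  by_cases hxs : x ∈ s
  · rcases eq_or_ne s univ with rfl | hs
    · simp
    obtain ⟨y, hy, hxy⟩ := exists_mem_frontier_infDist_compl_eq_dist hxs hs
    exact (infDist_le_dist_of_mem hy).trans_eq hxy.symm
  · have : x ∈ frontier s := ⟨hx, fun h => hxs (interior_subset h)⟩
    rw [infDist_zero_of_mem this]
    exact infDist_nonneg

theorem IsOpen.frontier_connectedComponentIn_subset {X : Type*} [TopologicalSpace X]
    [LocallyConnectedSpace X] {U : Set X} (hU : IsOpen U) (x : X) :
    frontier (connectedComponentIn U x) ⊆ Uᶜ := by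
  -- the open component of a point `y ∈ U` in the closure would meet, hence equal, that of `x`
  intro y hy hyU
  have hopen : IsOpen (connectedComponentIn U y) := hU.connectedComponentIn
  obtain ⟨z, hzy, hzx⟩ := _root_.mem_closure_iff.mp hy.1 _ hopen (mem_connectedComponentIn hyU)
  rw [hU.connectedComponentIn.frontier_eq, connectedComponentIn_eq hzx,
    ← connectedComponentIn_eq hzy] at hy
  exact hy.2 (mem_connectedComponentIn hyU)

theorem ContinuousOn.mapsTo_closure_connectedComponentIn {X : Type*} [TopologicalSpace X]
    {f : ℝ → X} {a b : ℝ} {U : Set X} (hf : ContinuousOn f (Icc a b))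
    (hU : MapsTo f (Ioo a b) U) {t : ℝ} (ht : t ∈ Ioo a b) :
    MapsTo f (Icc a b) (closure (connectedComponentIn U (f t))) := by
  have hsub : f '' Ioo a b ⊆ connectedComponentIn U (f t) :=
    (isPreconnected_Ioo.image f (hf.mono Ioo_subset_Icc_self)).subset_connectedComponentIn
      (mem_image_of_mem f ht) hU.image_subset
  rw [← closure_Ioo (ht.1.trans ht.2).ne] at hf ⊢
  exact fun s hs => closure_mono hsub (hf.image_closure (mem_image_of_mem f hs))

theorem min_eVariationOn_le_liminf {ι X : Type*} [PseudoEMetricSpace X] {p : Filter ι}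
    {F : ι → ℝ → X} {f : ℝ → X} (hF : ∀ x ∈ Icc (0:ℝ) 1, Tendsto (fun i => F i x) p (𝓝 (f x)))
    {t : ℝ} (ht : t ∈ Icc (0:ℝ) 1) :
    min (eVariationOn f (Icc 0 t)) (eVariationOn f (Icc t 1)) ≤
      p.liminf fun i => min (eVariationOn (F i) (Icc 0 t)) (eVariationOn (F i) (Icc t 1)) := by
  rw [liminf_min]
  exact min_le_min
    (eVariationOn_le_liminf_of_tendsto fun x hx => hF x (Icc_subset_Icc le_rfl ht.2 hx))
    (eVariationOn_le_liminf_of_tendsto fun x hx => hF x (Icc_subset_Icc ht.1 le_rfl hx))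

theorem exists_subseq_tendstoUniformlyOn_of_lipschitzOnWith {α β : Type*} [PseudoMetricSpace α]
    [MetricSpace β] [ProperSpace β] {s : Set α} (hs : IsCompact s) {K : ℝ≥0} {f : ℕ → α → β}
    (hf : ∀ n, LipschitzOnWith K (f n) s) {t₀ : α} (ht₀ : t₀ ∈ s)
    (hb : Bornology.IsBounded (range fun n => f n t₀)) :
    ∃ φ : ℕ → ℕ, StrictMono φ ∧ ∃ g : α → β,
      TendstoUniformlyOn (fun n => f (φ n)) g atTop s := by
  classical
  have : CompactSpace s := isCompact_iff_compactSpace.mp hs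
  obtain ⟨c, -, hr⟩ := hb.subset_closedBall_lt 0 (f 0 t₀)
  let F : ℕ → s →ᵇ β := fun n =>
    BoundedContinuousFunction.mkOfCompact ⟨s.domRestrict (f n), (hf n).continuousOn.domRestrict⟩
  have hF_mem : ∀ (h : s →ᵇ β) (x : s), h ∈ range F →
      h x ∈ closedBall (f 0 t₀) (c + K * diam s) := by
    rintro _ x ⟨n, rfl⟩
    calc dist (f n x) (f 0 t₀) ≤ dist (f n x) (f n t₀) + dist (f n t₀) (f 0 t₀) :=
          dist_triangle _ _ _
      _ ≤ K * diam s + c := add_le_add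
          ((hf n).dist_le_mul x x.2 t₀ ht₀ |>.trans
            (mul_le_mul_of_nonneg_left (dist_le_diam_of_mem hs.isBounded x.2 ht₀) K.2))
          (hr ⟨n, rfl⟩)
      _ = c + K * diam s := add_comm _ _
  have hF_equicont : Equicontinuous ((↑) : range F → s → β) := by
    refine (LipschitzWith.uniformEquicontinuous _ K ?_).equicontinuous
    rintro ⟨_, n, rfl⟩
    exact (hf n).to_restrict
  obtain ⟨G, -, φ, hφ, hG⟩ := (BoundedContinuousFunction.arzela_ascoli _ (isCompact_closedBall _ _)
    _ hF_mem hF_equicont).tendsto_subseq fun n => subset_closure (mem_range_self n)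
  refine ⟨φ, hφ, fun t => if ht : t ∈ s then G ⟨t, ht⟩ else f 0 t, ?_⟩
  rw [tendstoUniformlyOn_iff_tendstoUniformly_comp_coe]
  convert BoundedContinuousFunction.tendsto_iff_tendstoUniformly.mp hG
  · rfl
  · exact funext fun x => dif_pos x.2

namespace ConstSpeedOn

variable {γ : ℝ → ℂ}

theorem min_eVariationOn (hγ : ConstSpeedOn γ) {t : ℝ} (ht : t ∈ Icc (0:ℝ) 1) :
    min (eVariationOn γ (Icc 0 t)) (eVariationOn γ (Icc t 1)) =
      ENNReal.ofReal (min t (1 - t)) * eVariationOn γ (Icc 0 1) := by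
  have hmono : Monotone fun r => ENNReal.ofReal r * eVariationOn γ (Icc 0 1) :=
    fun _ _ h => mul_le_mul_left (ENNReal.ofReal_le_ofReal h) _
  have h0t := hγ 0 t le_rfl ht.1 ht.2
  rw [sub_zero] at h0t
  rw [hmono.map_min, ← h0t, ← hγ t 1 ht.1 ht.2 le_rfl]

theorem ofReal_min_mul_edist_le (hγ : ConstSpeedOn γ) {t : ℝ} (ht : t ∈ Icc (0:ℝ) 1) :
    ENNReal.ofReal (min t (1 - t)) * edist (γ 0) (γ 1) ≤
      min (eVariationOn γ (Icc 0 t)) (eVariationOn γ (Icc t 1)) := by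
  rw [hγ.min_eVariationOn ht]
  exact mul_le_mul_right
    (eVariationOn.edist_le _ (left_mem_Icc.2 zero_le_one) (right_mem_Icc.2 zero_le_one)) _

theorem lipschitzOnWith (hγ : ConstSpeedOn γ) {L : ℝ≥0} (hL : eVariationOn γ (Icc 0 1) ≤ L) :
    LipschitzOnWith L γ (Icc 0 1) := by
  have key : ∀ x ∈ Icc (0:ℝ) 1, ∀ y ∈ Icc (0:ℝ) 1, x ≤ y → edist (γ x) (γ y) ≤ L * edist x y := by
    intro x hx y hy hxy
    calc edist (γ x) (γ y) ≤ eVariationOn γ (Icc x y) :=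
          eVariationOn.edist_le _ (left_mem_Icc.mpr hxy) (right_mem_Icc.mpr hxy)
      _ = ENNReal.ofReal (y - x) * eVariationOn γ (Icc 0 1) := hγ x y hx.1 hxy hy.2
      _ ≤ edist x y * L := by
          rw [edist_comm, edist_dist, Real.dist_eq, abs_of_nonneg (sub_nonneg.2 hxy)]
          exact mul_le_mul_right hL _
      _ = L * edist x y := mul_comm _ _
  intro x hx y hy
  rcases le_total x y with hxy | hyx
  · exact key x hx y hy hxy
  · rw [edist_comm, edist_comm x]
    exact key y hy x hx hyx

end ConstSpeedOn

namespace IsUniformCurveIn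

variable {A : ℝ} {Ω : Set ℂ} {γ : ℝ → ℂ}

theorem min_eVariationOn_le_infEDist_compl (hγ : IsUniformCurveIn A Ω γ) (hA : 0 ≤ A)
    {t : ℝ} (ht : t ∈ Icc (0:ℝ) 1) :
    min (eVariationOn γ (Icc 0 t)) (eVariationOn γ (Icc t 1)) ≤
      ENNReal.ofReal A * infEDist (γ t) Ωᶜ := by
  refine (hγ.2.2.2 t ht).trans ?_
  rw [ENNReal.ofReal_mul hA]
  exact mul_le_mul_right (ofReal_infDist_frontier_le_infEDist_compl (hγ.2.1 ht)) _

theorem frontier_nonempty (hγ : IsUniformCurveIn A Ω γ) (hs : ConstSpeedOn γ)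
    (hne : γ 0 ≠ γ 1) : (frontier Ω).Nonempty := by
  by_contra hfr
  have h := (hs.ofReal_min_mul_edist_le (t := 1 / 2) (by norm_num)).trans
    (hγ.2.2.2 _ (by norm_num))
  rw [not_nonempty_iff_eq_empty.mp hfr, infDist_empty, mul_zero, ENNReal.ofReal_zero,
    nonpos_iff_eq_zero, mul_eq_zero] at h
  rcases h with h | h
  · norm_num at h
  · exact hne (edist_eq_zero.1 h)

end IsUniformCurveIn

theorem eVariationOn_le_ofReal_mul_dist_of_tendsto {ι X : Type*} [PseudoMetricSpace X]
    {p : Filter ι} [p.NeBot] {A : ℝ} {F : ι → ℝ → X} {f : ℝ → X}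
    (hF : ∀ x ∈ Icc (0:ℝ) 1, Tendsto (fun i => F i x) p (𝓝 (f x)))
    (hlen : ∀ i, eVariationOn (F i) (Icc 0 1) ≤ ENNReal.ofReal (A * dist (F i 0) (F i 1))) :
    eVariationOn f (Icc 0 1) ≤ ENNReal.ofReal (A * dist (f 0) (f 1)) := by
  have hdist : Tendsto (fun i => ENNReal.ofReal (A * dist (F i 0) (F i 1))) p
      (𝓝 (ENNReal.ofReal (A * dist (f 0) (f 1)))) :=
    (ENNReal.continuous_ofReal.tendsto _).comp
      (((hF 0 (left_mem_Icc.2 zero_le_one)).dist (hF 1 (right_mem_Icc.2 zero_le_one))).const_mul A)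
  exact (eVariationOn_le_liminf_of_tendsto hF).trans <|
    (liminf_le_liminf (Eventually.of_forall hlen)).trans_eq hdist.liminf_eq

theorem liminf_min_eVariationOn_pos_of_constSpeedOn {ι : Type*} {p : Filter ι} [p.NeBot]
    {F : ι → ℝ → ℂ} (hF : ∀ i, ConstSpeedOn (F i)) {z₀ z₁ : ℂ}
    (h0 : Tendsto (fun i => F i 0) p (𝓝 z₀)) (h1 : Tendsto (fun i => F i 1) p (𝓝 z₁))
    (hne : z₀ ≠ z₁) {t : ℝ} (ht : t ∈ Ioo (0:ℝ) 1) :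
    0 < p.liminf fun i => min (eVariationOn (F i) (Icc 0 t)) (eVariationOn (F i) (Icc t 1)) := by
  have hsep : Tendsto (fun i => ENNReal.ofReal (min t (1 - t)) * edist (F i 0) (F i 1)) p
      (𝓝 (ENNReal.ofReal (min t (1 - t)) * edist z₀ z₁)) :=
    ENNReal.Tendsto.const_mul (h0.edist h1) (Or.inr ENNReal.ofReal_ne_top)
  refine lt_of_lt_of_le ?_ (hsep.liminf_eq.symm.trans_le (liminf_le_liminf
    (Eventually.of_forall fun i => (hF i).ofReal_min_mul_edist_le (Ioo_subset_Icc_self ht))))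
  exact ENNReal.mul_pos (ENNReal.ofReal_pos.2 (lt_min ht.1 (sub_pos.2 ht.2))).ne'
    (edist_pos.2 hne).ne'

theorem nonempty_of_tendsto_hausdorffEDist_compl {A : ℝ} {Ωs : ℕ → Set ℂ} {γs : ℕ → ℝ → ℂ}
    (hγ : ∀ n, IsUniformCurveIn A (Ωs n) (γs n)) (hspeed : ∀ n, ConstSpeedOn (γs n))
    (hsep : ∃ᶠ n in atTop, γs n 0 ≠ γs n 1) {E : Set ℂ}
    (hconv : Tendsto (fun n => hausdorffEDist (Ωs n)ᶜ E) atTop (𝓝 0)) : E.Nonempty := by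
  obtain ⟨n, hn, hfin⟩ := (hsep.and_eventually (hconv.eventually_ne ENNReal.zero_ne_top)).exists
  have hfr := (hγ n).frontier_nonempty (hspeed n) hn
  exact nonempty_of_hausdorffEDist_ne_top (nonempty_compl.2 (nonempty_frontier_iff.1 hfr).2) hfin

theorem exists_subseq_tendstoUniformlyOn_of_isUniformCurveIn {A : ℝ} (hA : 0 ≤ A)
    {Ωs : ℕ → Set ℂ} {γs : ℕ → ℝ → ℂ} (hγ : ∀ n, IsUniformCurveIn A (Ωs n) (γs n))
    (hspeed : ∀ n, ConstSpeedOn (γs n)) {z₀ z₁ : ℂ} (h0 : Tendsto (fun n => γs n 0) atTop (𝓝 z₀))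
    (h1 : Tendsto (fun n => γs n 1) atTop (𝓝 z₁)) :
    ∃ φ : ℕ → ℕ, StrictMono φ ∧ ∃ γ : ℝ → ℂ,
      TendstoUniformlyOn (fun n => γs (φ n)) γ atTop (Icc 0 1) := by
  obtain ⟨C, hC⟩ := (h0.dist h1).bddAbove_range
  have hlen : ∀ n, eVariationOn (γs n) (Icc 0 1) ≤ (A * C).toNNReal := fun n =>
    (hγ n).2.2.1.trans (ENNReal.ofReal_le_ofReal (mul_le_mul_of_nonneg_left (hC ⟨n, rfl⟩) hA))
  exact exists_subseq_tendstoUniformlyOn_of_lipschitzOnWith isCompact_Icc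
    (fun n => (hspeed n).lipschitzOnWith (hlen n)) (left_mem_Icc.2 zero_le_one)
    (isBounded_range_of_tendsto _ h0)

theorem isUniformCurveIn_connectedComponentIn {A : ℝ} (hA : 0 ≤ A) {E : Set ℂ} (hE : IsClosed E)
    (hE_ne : E.Nonempty) {γ : ℝ → ℂ} (hcont : ContinuousOn γ (Icc 0 1))
    (hlen : eVariationOn γ (Icc 0 1) ≤ ENNReal.ofReal (A * dist (γ 0) (γ 1)))
    (hcigar : ∀ t ∈ Icc (0:ℝ) 1, min (eVariationOn γ (Icc 0 t)) (eVariationOn γ (Icc t 1)) ≤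
      ENNReal.ofReal A * infEDist (γ t) E)
    (hint : MapsTo γ (Ioo 0 1) Eᶜ) {t₀ : ℝ} (ht₀ : t₀ ∈ Ioo 0 1) :
    IsUniformCurveIn A (connectedComponentIn Eᶜ (γ t₀)) γ := by
  set Ω := connectedComponentIn Eᶜ (γ t₀)
  have hfr : frontier Ω ⊆ E := by
    simpa only [compl_compl] using hE.isOpen_compl.frontier_connectedComponentIn_subset (γ t₀)
  have hfr_ne : (frontier Ω).Nonempty := by
    refine nonempty_frontier_iff.2 ⟨⟨_, mem_connectedComponentIn (hint ht₀)⟩, fun hΩ => ?_⟩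
    obtain ⟨e, he⟩ := hE_ne
    exact connectedComponentIn_subset Eᶜ (γ t₀) (hΩ ▸ mem_univ e : e ∈ Ω) he
  refine ⟨hcont, hcont.mapsTo_closure_connectedComponentIn hint ht₀, hlen,
    fun t ht => (hcigar t ht).trans ?_⟩
  rw [ENNReal.ofReal_mul hA]
  refine mul_le_mul_right ?_ _
  calc infEDist (γ t) E ≤ infEDist (γ t) (frontier Ω) := infEDist_anti hfr
    _ = ENNReal.ofReal (infDist (γ t) (frontier Ω)) :=
      (ENNReal.ofReal_toReal (infEDist_ne_top hfr_ne)).symm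

theorem statement_8 (A : ℝ) (hA : 1 ≤ A) (Ωs : ℕ → Set ℂ)
    (E : Set ℂ) (hE : IsCompact E)
    (hconv : Tendsto (fun n => EMetric.hausdorffEdist (Ωs n)ᶜ E) atTop (nhds 0))
    (γs : ℕ → ℝ → ℂ) (hγ : ∀ n, IsUniformCurveIn A (Ωs n) (γs n))
    (hspeed : ∀ n, ConstSpeedOn (γs n))
    (z₀ z₁ : ℂ) (h0 : Tendsto (fun n => γs n 0) atTop (nhds z₀))
    (h1 : Tendsto (fun n => γs n 1) atTop (nhds z₁)) (hne : z₀ ≠ z₁) :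
    ∃ Ω' : Set ℂ, (∃ z ∈ Eᶜ, Ω' = connectedComponentIn Eᶜ z) ∧
      ∃ φ : ℕ → ℕ, StrictMono φ ∧ ∃ γ : ℝ → ℂ,
        TendstoUniformlyOn (fun n => γs (φ n)) γ atTop (Set.Icc 0 1) ∧
        IsUniformCurveIn A Ω' γ ∧ γ 0 = z₀ ∧ γ 1 = z₁ := by
  have hA0 : 0 ≤ A := zero_le_one.trans hA
  obtain ⟨φ, hφ, γ, hunif⟩ :=
    exists_subseq_tendstoUniformlyOn_of_isUniformCurveIn hA0 hγ hspeed h0 h1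
  have hlim : ∀ t ∈ Icc (0:ℝ) 1, Tendsto (fun n => γs (φ n) t) atTop (𝓝 (γ t)) :=
    fun t ht => hunif.tendsto_at ht
  have hγ0 : γ 0 = z₀ :=
    tendsto_nhds_unique (hlim 0 (left_mem_Icc.2 zero_le_one)) (h0.comp hφ.tendsto_atTop)
  have hγ1 : γ 1 = z₁ :=
    tendsto_nhds_unique (hlim 1 (right_mem_Icc.2 zero_le_one)) (h1.comp hφ.tendsto_atTop)
  have hcigar : ∀ t ∈ Icc (0:ℝ) 1, atTop.liminf (fun n =>
      min (eVariationOn (γs (φ n)) (Icc 0 t)) (eVariationOn (γs (φ n)) (Icc t 1))) ≤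
        ENNReal.ofReal A * infEDist (γ t) E := fun t ht =>
    liminf_le_mul_infEDist_of_tendsto ENNReal.ofReal_ne_top (hlim t ht)
      (hconv.comp hφ.tendsto_atTop) fun n => (hγ (φ n)).min_eVariationOn_le_infEDist_compl hA0 ht
  have hint : MapsTo γ (Ioo 0 1) Eᶜ := fun t ht htE => by
    have h := (liminf_min_eVariationOn_pos_of_constSpeedOn (fun n => hspeed (φ n))
      (h0.comp hφ.tendsto_atTop) (h1.comp hφ.tendsto_atTop) hne ht).trans_le
        (hcigar t (Ioo_subset_Icc_self ht))
    rw [infEDist_zero_of_mem htE, mul_zero] at h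
    exact h.false
  have hE_ne : E.Nonempty := nonempty_of_tendsto_hausdorffEDist_compl hγ hspeed
    (((h0.dist h1).eventually_ne (dist_ne_zero.2 hne)).mono fun _ => dist_ne_zero.1).frequently
    hconv
  have ht₀ : (1 / 2 : ℝ) ∈ Ioo 0 1 := by norm_num
  refine ⟨_, ⟨γ (1 / 2), hint ht₀, rfl⟩, φ, hφ, γ, hunif, ?_, hγ0, hγ1⟩
  exact isUniformCurveIn_connectedComponentIn hA0 hE.isClosed hE_ne
    (hunif.continuousOn (Frequently.of_forall fun n => (hγ (φ n)).1))
    (eVariationOn_le_ofReal_mul_dist_of_tendsto hlim fun n => (hγ (φ n)).2.2.1)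
    (fun t ht => (min_eVariationOn_le_liminf hlim ht).trans (hcigar t ht)) hint ht₀
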